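/- arXiv:2211.04366 — 3 statements merged into one kernel-verified Lean document; each statement's English description precedes it below -/
import Mathlib

section
/- Let W be a dual Banach space and X ⊆ W a subspace admitting a Lebesgue decomposition X* = AC_W(X) ⊕₁ SG_W(X). A functional φ ∈ X* is singular (i.e. φ ∈ SG_W(X)) if and only if there exists a net (x_α) in the closed unit ball of X converging to 0 in the weak-* topology of W such that φ(x_α) converges to ‖φ‖. -/
/-! A singular functional `φ` stays at distance at least `‖φ‖` from every absolutely continuous
`α`: the projection sends `φ - α` to `-α`, so the ℓ¹ identity gives `‖φ - α‖ = ‖α‖ + ‖φ‖`.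
A weak-* neighbourhood of `0` contains the joint kernel `N` of finitely many evaluations at points
of `V`, and a functional vanishing on `N` is a combination of these evaluations, hence absolutely
continuous. For a Hahn–Banach extension `ψ` of `φ|_N` this makes `φ - ψ` absolutely continuous,
so `‖φ|_N‖ = ‖ψ‖ ≥ ‖φ‖`, and after a rotation the unit ball of `N` contains points where `φ` is
real and close to `‖φ‖`. Conversely, along such a net the absolutely continuous part `L φ` tends to
`0`, so `‖φ - L φ‖ ≥ ‖φ‖` and the ℓ¹ identity forces `L φ = 0`. -/

open NormedSpace Filter Topology

noncomputable instance instAddCommGroupStrongDualC {V : Type*} [NormedAddCommGroup V] [NormedSpace ℂ V] :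
    AddCommGroup (StrongDual ℂ V) := ContinuousLinearMap.addCommGroup
noncomputable instance instSeminormedAddCommGroupStrongDualC {V : Type*} [NormedAddCommGroup V]
    [NormedSpace ℂ V] : SeminormedAddCommGroup (StrongDual ℂ V) :=
  ContinuousLinearMap.toSeminormedAddCommGroup

def WeakStarContinuous {V : Type*} [NormedAddCommGroup V] [NormedSpace ℂ V]
    (Φ : StrongDual ℂ V → ℂ) : Prop :=
  Continuous fun w : WeakDual ℂ V => Φ (WeakDual.toStrongDual w)

def ACset {V : Type*} [NormedAddCommGroup V] [NormedSpace ℂ V]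
    (X : Subspace ℂ (StrongDual ℂ V)) : Set (StrongDual ℂ ↥X) :=
  {φ | ∃ Φ : StrongDual ℂ V →ₗ[ℂ] ℂ, WeakStarContinuous Φ ∧ ∀ x : ↥X, Φ (x : StrongDual ℂ V) = φ x}

/-- `X` admits a Lebesgue decomposition relative to `W = V*`, witnessed by the bounded
linear idempotent `L` with range the absolutely continuous functionals, satisfying the
ℓ¹-norm identity. The singular functionals are those with `L φ = 0`. -/
def IsLebesgueDecomposition {V : Type*} [NormedAddCommGroup V] [NormedSpace ℂ V]
    (X : Subspace ℂ (StrongDual ℂ V)) (L : StrongDual ℂ ↥X →L[ℂ] StrongDual ℂ ↥X) : Prop :=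
  (∀ φ, L (L φ) = L φ) ∧ Set.range L = ACset X ∧
    ∀ φ : StrongDual ℂ ↥X, ‖φ‖ = ‖L φ‖ + ‖φ - L φ‖

theorem WeakDual.exists_finset_forall_eq_zero_mem {𝕜 E : Type*} [NormedField 𝕜]
    [AddCommGroup E] [TopologicalSpace E] [Module 𝕜 E] {U : Set (WeakDual 𝕜 E)}
    (hU : U ∈ 𝓝 0) : ∃ s : Finset E, ∀ w : WeakDual 𝕜 E, (∀ v ∈ s, w v = 0) → w ∈ U := by
  replace hU : U ∈ 𝓝 (0 : WeakBilin (topDualPairing 𝕜 E)) := hU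
  rw [nhds_induced (fun (w : WeakBilin (topDualPairing 𝕜 E)) v => topDualPairing 𝕜 E w v)] at hU
  obtain ⟨t, ht, htU⟩ := Filter.mem_comap.mp hU
  rw [nhds_pi, Filter.mem_pi'] at ht
  obtain ⟨s, u, hu, hsu⟩ := ht
  refine ⟨s, fun w hw => htU (hsu fun v hv => ?_)⟩
  have hwv : topDualPairing 𝕜 E w v = topDualPairing 𝕜 E 0 v := by
    rw [map_zero, LinearMap.zero_apply]; exact hw v hv
  change topDualPairing 𝕜 E w v ∈ u v
  exact hwv ▸ mem_of_mem_nhds (hu v)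

theorem StrongDual.exists_norm_le_one_apply_smul_eq_norm {𝕜 E : Type*} [RCLike 𝕜]
    [SeminormedAddCommGroup E] [NormedSpace 𝕜 E] (f : StrongDual 𝕜 E) (z : E) :
    ∃ c : 𝕜, ‖c‖ ≤ 1 ∧ f (c • z) = ‖f z‖ := by
  rcases eq_or_ne (f z) 0 with h | h
  · exact ⟨0, by simp, by simp [h]⟩
  · refine ⟨‖f z‖ / f z, by simp [h], ?_⟩
    rw [map_smul, smul_eq_mul, div_mul_cancel₀ _ h]

theorem ContinuousLinearMap.exists_norm_le_one_lt_norm_apply {𝕜 E F : Type*} [RCLike 𝕜]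
    [SeminormedAddCommGroup E] [NormedSpace 𝕜 E] [SeminormedAddCommGroup F] [NormedSpace 𝕜 F]
    (f : E →L[𝕜] F) {r : ℝ} (hr : r < ‖f‖) : ∃ x : E, ‖x‖ ≤ 1 ∧ r < ‖f x‖ := by
  rcases lt_or_ge r 0 with hr0 | hr0
  · exact ⟨0, by simp, by simpa using hr0⟩
  obtain ⟨y, hy⟩ := f.exists_mul_lt_of_lt_opNorm hr0 hr
  have hy0 : 0 < ‖y‖ := by
    by_contra! hy0
    have := f.le_opNorm y
    nlinarith [norm_nonneg y, norm_nonneg f]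
  refine ⟨(‖y‖⁻¹ : 𝕜) • y, ?_, ?_⟩
  · rw [norm_smul, norm_inv, RCLike.norm_ofReal, abs_norm, inv_mul_cancel₀ hy0.ne']
  · rw [map_smul, norm_smul, norm_inv, RCLike.norm_ofReal, abs_norm, ← div_eq_inv_mul,
      lt_div_iff₀ hy0]
    exact hy

theorem StrongDual.exists_norm_le_one_lt_apply_eq_norm {𝕜 E : Type*} [RCLike 𝕜]
    [SeminormedAddCommGroup E] [NormedSpace 𝕜 E] (f : StrongDual 𝕜 E) {r : ℝ} (hr : r < ‖f‖) :
    ∃ x : E, ‖x‖ ≤ 1 ∧ r < ‖f x‖ ∧ f x = ‖f x‖ := by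
  obtain ⟨y, hy1, hry⟩ := f.exists_norm_le_one_lt_norm_apply hr
  obtain ⟨c, hc1, hc⟩ := f.exists_norm_le_one_apply_smul_eq_norm y
  have hcy : ‖f (c • y)‖ = ‖f y‖ := by rw [hc, RCLike.norm_ofReal, abs_norm]
  refine ⟨c • y, ?_, hcy ▸ hry, by rw [hcy, hc]⟩
  calc ‖c • y‖ ≤ ‖c‖ * ‖y‖ := norm_smul_le c y
    _ ≤ 1 := mul_le_one₀ hc1 (norm_nonneg y) hy1

section

variable {V : Type*} [NormedAddCommGroup V] [NormedSpace ℂ V] (X : Subspace ℂ (StrongDual ℂ V))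

noncomputable def subspaceEval (v : V) : ↥X →ₗ[ℂ] ℂ := ((topDualPairing ℂ V).flip v).comp X.subtype

noncomputable def jointKer (s : Finset V) : Subspace ℂ ↥X :=
  ⨅ v : s, LinearMap.ker (subspaceEval X v)

theorem mem_jointKer_iff {s : Finset V} {z : ↥X} :
    z ∈ jointKer X s ↔ ∀ v ∈ s, (z : StrongDual ℂ V) v = 0 := by
  simp [jointKer, Submodule.mem_iInf, subspaceEval]

theorem mem_ACset_of_jointKer_le {s : Finset V} {χ : StrongDual ℂ ↥X}
    (h : jointKer X s ≤ LinearMap.ker (χ : ↥X →ₗ[ℂ] ℂ)) :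
    χ ∈ ACset X := by
  obtain ⟨c, hc⟩ := (Submodule.mem_span_range_iff_exists_fun ℂ).mp (mem_span_of_iInf_ker_le_ker h)
  refine ⟨∑ v : s, c v • (topDualPairing ℂ V).flip v, ?_, fun x => ?_⟩
  · have hΦ : (fun w : WeakDual ℂ V =>
        (∑ v : s, c v • (topDualPairing ℂ V).flip v) (WeakDual.toStrongDual w)) =
        fun w => ∑ v : s, c v * w v := by
      funext w
      simp [LinearMap.sum_apply]
    rw [WeakStarContinuous, hΦ]
    exact continuous_finsetSum _ fun v _ => continuous_const.mul (WeakDual.eval_continuous v.1)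
  · simpa [subspaceEval, LinearMap.sum_apply] using LinearMap.congr_fun hc x

theorem tendsto_apply_zero_of_mem_ACset {α : StrongDual ℂ ↥X} (hα : α ∈ ACset X) {ι : Type*}
    {l : Filter ι} {x : ι → ↥X}
    (hx : Tendsto (fun i => StrongDual.toWeakDual (x i : StrongDual ℂ V)) l (𝓝 0)) :
    Tendsto (fun i => α (x i)) l (𝓝 0) := by
  obtain ⟨Φ, hΦc, hΦ⟩ := hα
  simpa [Function.comp_def, hΦ] using (hΦc.tendsto 0).comp hx

end

namespace IsLebesgueDecomposition

variable {V : Type*} [NormedAddCommGroup V] [NormedSpace ℂ V] {X : Subspace ℂ (StrongDual ℂ V)}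
  {L : StrongDual ℂ ↥X →L[ℂ] StrongDual ℂ ↥X} {φ : StrongDual ℂ ↥X}

theorem norm_le_norm_sub (hL : IsLebesgueDecomposition X L) (hφ : L φ = 0)
    {α : StrongDual ℂ ↥X} (hα : α ∈ ACset X) : ‖φ‖ ≤ ‖φ - α‖ := by
  obtain ⟨hidem, hrange, hnorm⟩ := hL
  obtain ⟨β, rfl⟩ : α ∈ Set.range L := hrange ▸ hα
  have hL_sub : L (φ - L β) = -L β := by rw [map_sub L φ (L β), hφ, hidem]; abel
  have := hnorm (φ - L β)
  rw [hL_sub, show φ - L β - -L β = φ by abel] at this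
  rw [this]
  exact le_add_of_nonneg_left (ContinuousLinearMap.opNorm_nonneg _)

theorem exists_mem_jointKer_lt_apply_eq_norm (hL : IsLebesgueDecomposition X L)
    (hφ : L φ = 0) (s : Finset V) {r : ℝ} (hr : r < ‖φ‖) :
    ∃ z ∈ jointKer X s, ‖z‖ ≤ 1 ∧ r < ‖φ z‖ ∧ φ z = ‖φ z‖ := by
  set N := jointKer X s
  obtain ⟨ψ, hψφ, hψ⟩ := exists_extension_norm_eq N (φ.comp N.subtypeL)
  have hAC : φ - ψ ∈ ACset X := mem_ACset_of_jointKer_le X fun z hz => by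
    simpa [sub_eq_zero] using (hψφ ⟨z, hz⟩).symm
  have hφψ : ‖φ‖ ≤ ‖ψ‖ := by
    have := hL.norm_le_norm_sub hφ hAC
    rwa [show φ - (φ - ψ) = ψ by abel] at this
  obtain ⟨z, hz⟩ :=
    StrongDual.exists_norm_le_one_lt_apply_eq_norm _ ((hr.trans_le hφψ).trans_eq hψ)
  exact ⟨z, z.2, hz⟩

theorem exists_norm_le_one_mem_nhds (hL : IsLebesgueDecomposition X L) (hφ : L φ = 0)
    {t : Set (WeakDual ℂ V × ℂ)} (ht : t ∈ 𝓝 ((0 : WeakDual ℂ V), (‖φ‖ : ℂ))) :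
    ∃ x : ↥X, ‖x‖ ≤ 1 ∧ (StrongDual.toWeakDual (x : StrongDual ℂ V), φ x) ∈ t := by
  obtain ⟨U, hU, B, hB, hUB⟩ := mem_nhds_prod_iff.mp ht
  obtain ⟨s, hs⟩ := WeakDual.exists_finset_forall_eq_zero_mem hU
  obtain ⟨ε, hε, hεB⟩ := Metric.mem_nhds_iff.mp hB
  obtain ⟨z, hzN, hz1, hεz, hz⟩ := hL.exists_mem_jointKer_lt_apply_eq_norm hφ s (sub_lt_self ‖φ‖ hε)
  have hzφ : ‖φ z‖ ≤ ‖φ‖ := by simpa using φ.le_opNorm_of_le hz1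
  refine ⟨z, hz1, hUB ⟨hs _ ((mem_jointKer_iff X).mp hzN), hεB ?_⟩⟩
  rw [Metric.mem_ball, dist_eq_norm, hz, ← Complex.ofReal_sub, Complex.norm_real, Real.norm_eq_abs,
    abs_sub_lt_iff]
  constructor <;> linarith

theorem apply_eq_zero_of_tendsto (hL : IsLebesgueDecomposition X L) {ι : Type*} {l : Filter ι}
    [l.NeBot] {x : ι → ↥X} (hx1 : ∀ i, ‖x i‖ ≤ 1)
    (hx0 : Tendsto (fun i => StrongDual.toWeakDual (x i : StrongDual ℂ V)) l (𝓝 0))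
    (hφx : Tendsto (fun i => φ (x i)) l (𝓝 (‖φ‖ : ℂ))) : L φ = 0 := by
  obtain ⟨-, hrange, hnorm⟩ := hL
  have hLφx := tendsto_apply_zero_of_mem_ACset X (hrange ▸ Set.mem_range_self φ) hx0
  have hsx : Tendsto (fun i => (φ - L φ) (x i)) l (𝓝 (‖φ‖ : ℂ)) := by
    simpa using hφx.sub hLφx
  have hφs : ‖(‖φ‖ : ℂ)‖ ≤ ‖φ - L φ‖ * 1 :=
    le_of_tendsto hsx.norm (Eventually.of_forall fun i => (φ - L φ).le_opNorm_of_le (hx1 i))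
  rw [Complex.norm_real, Real.norm_of_nonneg (ContinuousLinearMap.opNorm_nonneg φ), mul_one] at hφs
  have hLφ : ‖L φ‖ ≤ 0 := by linarith [hnorm φ]
  exact (ContinuousLinearMap.opNorm_zero_iff _).mp
    (le_antisymm hLφ (ContinuousLinearMap.opNorm_nonneg _))

end IsLebesgueDecomposition

/-- a functional `φ ∈ X*` is singular (i.e. `L φ = 0`) iff there is a net
(formalized as a filter on an index type, with a map into the unit ball of `X`) converging
to `0` in the weak-* topology of `W` along which `φ` converges to `‖φ‖`. -/
theorem stmt1 {V : Type u} [NormedAddCommGroup V] [NormedSpace ℂ V]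
    (X : Subspace ℂ (StrongDual ℂ V)) (L : StrongDual ℂ ↥X →L[ℂ] StrongDual ℂ ↥X)
    (hL : IsLebesgueDecomposition X L) (φ : StrongDual ℂ ↥X) :
    L φ = 0 ↔ ∃ (ι : Type u) (l : Filter ι) (x : ι → ↥X), l.NeBot ∧
      (∀ i, ‖x i‖ ≤ 1) ∧
      Tendsto (fun i => StrongDual.toWeakDual ((x i : StrongDual ℂ V))) l (𝓝 0) ∧
      Tendsto (fun i => φ (x i)) l (𝓝 (‖φ‖ : ℂ)) := by
  constructor
  · intro hφ
    -- the net is the unit ball, filtered by pulling back the neighbourhoods of `(0, ‖φ‖)`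
    let F (x : {x : ↥X // ‖x‖ ≤ 1}) : WeakDual ℂ V × ℂ :=
      (StrongDual.toWeakDual (x.1 : StrongDual ℂ V), φ x.1)
    have hF : (comap F (𝓝 (0, (‖φ‖ : ℂ)))).NeBot := comap_neBot fun t ht => by
      obtain ⟨x, hx1, hxt⟩ := hL.exists_norm_le_one_mem_nhds hφ ht
      exact ⟨⟨x, hx1⟩, hxt⟩
    exact ⟨_, _, Subtype.val, hF, fun x => x.2, tendsto_comap.fst_nhds, tendsto_comap.snd_nhds⟩
  · rintro ⟨ι, l, x, hl, hx1, hx0, hφx⟩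
    exact hL.apply_eq_zero_of_tendsto hx1 hx0 hφx
end

section
/- Let X be a compact Hausdorff space, μ a regular Borel probability measure on X, and K ⊆ X a closed nowhere dense subset. Then for all continuous functions g, h ∈ C(X): ‖h‖_∞ ≤ ‖g·χ_K + h‖_{L^∞(μ)}, where χ_K is the indicator function of K. Consequently, for any state φ on C(X), the map g·χ_K + h ↦ φ(h) is a well-defined unital contractive linear functional on the subspace V = { g·χ_K + h : g, h ∈ C(X) } of L^∞(X, μ). -/
/-!
Off `K` the function `g·χ_K + h` agrees with `h`, so the essential bound `C` of `g·χ_K + h`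
bounds `‖h x‖` for almost every `x` in the open set `Kᶜ`. Since `Kᶜ` is dense and `μ` charges
every nonempty open set, these points are dense in `X`, and by continuity of `h` the bound
`‖h x‖ ≤ C` then holds everywhere. Applied to differences, this shows that the decomposition
`g·χ_K + h` determines `h`, so `g·χ_K + h ↦ φ(h)` is well defined and bounded by `‖φ‖ ≤ 1`.
-/

open MeasureTheory Set

section

variable {X : Type*} [TopologicalSpace X] [MeasurableSpace X]

theorem Dense.isOpenPosMeasure_restrict (μ : Measure X) [μ.IsOpenPosMeasure] {U : Set X}
    (hU : IsOpen U) (hdense : Dense U) : (μ.restrict U).IsOpenPosMeasure :=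
  ⟨fun V hV hne => (((hV.inter hU).measure_pos μ (hdense.inter_open_nonempty V hV hne)).trans_le
    (Measure.le_restrict_apply U V)).ne'⟩

variable [OpensMeasurableSpace X] [CompactSpace X] {E : Type*} [NormedAddCommGroup E]

theorem ContinuousMap.enorm_le_eLpNorm_top_of_eqOn (μ : Measure X) [μ.IsOpenPosMeasure]
    {U : Set X} (hU : IsOpen U) (hdense : Dense U) {f : X → E} {h : C(X, E)}
    (hfh : EqOn f h U) : ‖h‖ₑ ≤ eLpNorm f ⊤ μ := by
  have := hdense.isOpenPosMeasure_restrict μ hU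
  have hbound : ∀ᵐ x ∂μ.restrict U, ‖h x‖ₑ ≤ eLpNorm f ⊤ μ := by
    filter_upwards [ae_restrict_of_ae (ae_le_eLpNormEssSup (f := f) (μ := μ)),
      ae_restrict_mem hU.measurableSet] with x hfx hx
    rwa [← hfh hx]
  have hclosed : IsClosed {x | ‖h x‖ₑ ≤ eLpNorm f ⊤ μ} :=
    isClosed_le h.continuous.enorm continuous_const
  rw [ContinuousMap.enorm_eq_iSup_enorm]
  exact iSup_le fun x => hclosed.closure_subset (Measure.dense_of_ae hbound x)

theorem ContinuousMap.eq_of_ae_eq_of_eqOn (μ : Measure X) [μ.IsOpenPosMeasure]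
    {U : Set X} (hU : IsOpen U) (hdense : Dense U) {f f' : X → E} {h h' : C(X, E)}
    (hfh : EqOn f h U) (hfh' : EqOn f' h' U) (hff' : f =ᵐ[μ] f') : h = h' := by
  have hdiff : EqOn (f - f') ⇑(h - h') U := fun x hx => by simp [hfh hx, hfh' hx]
  have hzero : eLpNorm (f - f') ⊤ μ = 0 := by
    rw [eLpNorm_congr_ae (hff'.sub_eq : f - f' =ᵐ[μ] 0), eLpNorm_zero]
  have := (h - h').enorm_le_eLpNorm_top_of_eqOn μ hU hdense hdiff
  rwa [hzero, nonpos_iff_eq_zero, enorm_eq_zero, sub_eq_zero] at this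

end

theorem stmt15_general {X : Type*} [TopologicalSpace X] [CompactSpace X]
    [MeasurableSpace X] [BorelSpace X]
    (μ : Measure X) [μ.IsOpenPosMeasure]
    (K : Set X) (hK : IsClosed K) (hKnd : interior K = ∅) :
    (∀ g h : C(X, ℂ),
      ENNReal.ofReal ‖h‖ ≤
        eLpNorm (fun x => g x * K.indicator (fun _ => (1 : ℂ)) x + h x) ⊤ μ) ∧
    ∀ φ : C(X, ℂ) →L[ℂ] ℂ, φ 1 = 1 → ‖φ‖ ≤ 1 →
      -- well-definedness on `V`
      (∀ g h g' h' : C(X, ℂ),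
        (∀ᵐ x ∂μ, g x * K.indicator (fun _ => (1 : ℂ)) x + h x
          = g' x * K.indicator (fun _ => (1 : ℂ)) x + h' x) → φ h = φ h') ∧
      -- contractivity of `g·χ_K + h ↦ φ(h)` on `V ⊆ L∞(X, μ)`
      (∀ g h : C(X, ℂ),
        ENNReal.ofReal ‖φ h‖ ≤
          eLpNorm (fun x => g x * K.indicator (fun _ => (1 : ℂ)) x + h x) ⊤ μ) := by
  have hdense : Dense Kᶜ := interior_eq_empty_iff_dense_compl.mp hKnd
  have hoff : ∀ g h : C(X, ℂ),
      EqOn (fun x => g x * K.indicator (fun _ => (1 : ℂ)) x + h x) h Kᶜ := fun g h x hx => by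
    simp [indicator_of_notMem hx]
  have hsup : ∀ g h : C(X, ℂ), ENNReal.ofReal ‖h‖ ≤
      eLpNorm (fun x => g x * K.indicator (fun _ => (1 : ℂ)) x + h x) ⊤ μ := fun g h => by
    rw [ofReal_norm]
    exact h.enorm_le_eLpNorm_top_of_eqOn μ hK.isOpen_compl hdense (hoff g h)
  refine ⟨hsup, fun φ _ hφ => ⟨fun g h g' h' hae => ?_, fun g h => ?_⟩⟩
  · rw [ContinuousMap.eq_of_ae_eq_of_eqOn μ hK.isOpen_compl hdense (hoff g h) (hoff g' h') hae]
  · refine le_trans (ENNReal.ofReal_le_ofReal ?_) (hsup g h)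
    calc ‖φ h‖ ≤ ‖φ‖ * ‖h‖ := φ.le_opNorm h
      _ ≤ ‖h‖ := mul_le_of_le_one_left (norm_nonneg h) hφ

/-- let `X` be compact Hausdorff, `μ` a regular Borel probability measure
with full support, and `K ⊆ X` closed and nowhere dense. Then `‖h‖_∞ ≤ ‖g·χ_K + h‖_{L∞(μ)}`
for all continuous `g, h`, and consequently, for any state `φ` on `C(X)`, the assignment
`g·χ_K + h ↦ φ(h)` is a well-defined contractive (and unital) linear functional on the
subspace `V = {g·χ_K + h} ⊆ L∞(X, μ)`. -/
theorem stmt15 {X : Type*} [TopologicalSpace X] [CompactSpace X] [T2Space X]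
    [MeasurableSpace X] [BorelSpace X]
    (μ : Measure X) [IsProbabilityMeasure μ] [μ.Regular] [μ.IsOpenPosMeasure]
    (K : Set X) (hK : IsClosed K) (hKnd : interior K = ∅) :
    (∀ g h : C(X, ℂ),
      ENNReal.ofReal ‖h‖ ≤
        eLpNorm (fun x => g x * K.indicator (fun _ => (1 : ℂ)) x + h x) ⊤ μ) ∧
    ∀ φ : C(X, ℂ) →L[ℂ] ℂ, φ 1 = 1 → ‖φ‖ ≤ 1 →
      -- well-definedness on `V`
      (∀ g h g' h' : C(X, ℂ),
        (∀ᵐ x ∂μ, g x * K.indicator (fun _ => (1 : ℂ)) x + h x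
          = g' x * K.indicator (fun _ => (1 : ℂ)) x + h' x) → φ h = φ h') ∧
      -- contractivity of `g·χ_K + h ↦ φ(h)` on `V ⊆ L∞(X, μ)`
      (∀ g h : C(X, ℂ),
        ENNReal.ofReal ‖φ h‖ ≤
          eLpNorm (fun x => g x * K.indicator (fun _ => (1 : ℂ)) x + h x) ⊤ μ) :=
  stmt15_general μ K hK hKnd
end

section
/- Let X be a compact Hausdorff space, μ a regular Borel probability measure on X with full support, and suppose there exists a closed nowhere dense subset K ⊆ X with μ(K) > 0. Then there exists a state ψ on L^∞(X, μ) whose restriction to C(X) equals integration against μ, but ψ is not weak-* continuous on L^∞(X, μ); in particular, the inclusion C(X) ⊆ L^∞(X, μ) does not have the Gleason–Whitney property for states relative to L^∞(X, μ). -/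
/-!
On the span of `C(X)` and `χ_K` in `L∞(μ)`, the functional `f + c • χ_K ↦ ∫ f ∂μ` has norm at
most one: `Kᶜ` is open and dense and `μ` charges every nonempty open set, so
`‖f‖ ≤ ‖f + c • χ_K‖_∞`. A norm-preserving Hahn–Banach extension `ψ` therefore agrees with `μ`
on `C(X)` and kills `χ_K`. If `ψ` were integration against `g ∈ L¹(μ)`, then `g • μ` and `μ`
would agree on continuous functions, hence (Urysohn's lemma, outer regularity and absolute
continuity of the integral) on closed sets, and `0 = ψ χ_K = ∫_K g ∂μ = μ K > 0`.
-/

open MeasureTheory Set Filter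
open scoped ENNReal

theorem exists_dual_comp_eq_of_norm_le {𝕜 E F : Type*} [RCLike 𝕜] [AddCommGroup E] [Module 𝕜 E]
    [NormedAddCommGroup F] [NormedSpace 𝕜 F] (T : E →ₗ[𝕜] F) (L : E →ₗ[𝕜] 𝕜)
    (hL : ∀ x, ‖L x‖ ≤ ‖T x‖) :
    ∃ ψ : StrongDual 𝕜 F, ‖ψ‖ ≤ 1 ∧ ∀ x, ψ (T x) = L x := by
  have hker : LinearMap.ker T ≤ LinearMap.ker L := fun x hx => by
    simpa [LinearMap.mem_ker.1 hx] using hL x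
  let φ : LinearMap.range T →ₗ[𝕜] 𝕜 :=
    (LinearMap.ker T).liftQ L hker ∘ₗ T.quotKerEquivRange.symm.toLinearMap
  have hφ : ∀ x, φ ⟨T x, x, rfl⟩ = L x := fun x => by
    have : (⟨T x, x, rfl⟩ : LinearMap.range T) = T.quotKerEquivRange (Submodule.Quotient.mk x) :=
      Subtype.ext (T.quotKerEquivRange_apply_mk x).symm
    simp [φ, this]
  have hφ_le : ∀ y, ‖φ y‖ ≤ 1 * ‖y‖ := by
    rintro ⟨_, x, rfl⟩
    simpa [hφ] using hL x
  obtain ⟨ψ, hψ, hψ_norm⟩ := exists_extension_norm_eq _ (φ.mkContinuous 1 hφ_le)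
  exact ⟨ψ, hψ_norm ▸ LinearMap.mkContinuous_norm_le _ zero_le_one _,
    fun x => (hψ ⟨T x, x, rfl⟩).trans (hφ x)⟩

theorem MeasureTheory.Lp.ae_norm_le_norm_top {α E : Type*} [MeasurableSpace α] {μ : Measure α}
    [NormedAddCommGroup E] (u : Lp E ∞ μ) : ∀ᵐ x ∂μ, ‖u x‖ ≤ ‖u‖ := by
  rw [Lp.norm_def, toReal_eLpNorm (Lp.aestronglyMeasurable u)]
  exact ae_le_lpNorm_exponent_top (Lp.memLp u)

section

variable {X : Type*} [TopologicalSpace X] [MeasurableSpace X] {μ : Measure X}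

theorem MeasureTheory.Measure.isOpenPosMeasure_restrict_of_dense [OpensMeasurableSpace X]
    [μ.IsOpenPosMeasure] {U : Set X} (hU : IsOpen U) (hUd : Dense U) : (μ.restrict U).IsOpenPosMeasure where
  open_pos V hV hVne := by
    rw [Measure.restrict_apply hV.measurableSet]
    exact (hV.inter hU).measure_ne_zero μ (hUd.inter_open_nonempty V hV hVne)

theorem ContinuousMap.norm_le_of_ae_norm_le [CompactSpace X] [μ.IsOpenPosMeasure]
    {E : Type*} [NormedAddCommGroup E] (f : C(X, E)) {C : ℝ} (hC : 0 ≤ C)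
    (h : ∀ᵐ x ∂μ, ‖f x‖ ≤ C) : ‖f‖ ≤ C := by
  have hclosed : IsClosed {x | ‖f x‖ ≤ C} := isClosed_le (by fun_prop) continuous_const
  refine (f.norm_le hC).2 fun x => ?_
  have : x ∈ closure {x | ‖f x‖ ≤ C} := (μ.dense_of_ae h).closure_eq ▸ mem_univ x
  exact hclosed.closure_subset this

theorem ContinuousMap.norm_le_norm_of_ae_eq_on_compl [CompactSpace X] [OpensMeasurableSpace X]
    [μ.IsOpenPosMeasure] {E : Type*} [NormedAddCommGroup E] {K : Set X} (hK : IsClosed K)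
    (hKnd : interior K = ∅) (f : C(X, E)) (u : Lp E ∞ μ) (hu : ∀ᵐ x ∂μ, x ∉ K → u x = f x) :
    ‖f‖ ≤ ‖u‖ := by
  have := Measure.isOpenPosMeasure_restrict_of_dense (μ := μ) hK.isOpen_compl
    (interior_eq_empty_iff_dense_compl.1 hKnd)
  refine f.norm_le_of_ae_norm_le (μ := μ.restrict Kᶜ) (norm_nonneg u) ?_
  rw [ae_restrict_iff' hK.isOpen_compl.measurableSet]
  filter_upwards [hu, Lp.ae_norm_le_norm_top u] with x hx hle hxK
  exact hx hxK ▸ hle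

theorem norm_integral_le_norm_toLp_add_smul_indicatorConstLp [CompactSpace X] [BorelSpace X]
    [IsProbabilityMeasure μ] [μ.IsOpenPosMeasure] {K : Set X} (hK : IsClosed K)
    (hKnd : interior K = ∅) (f : C(X, ℂ)) (c : ℂ) :
    ‖∫ x, f x ∂μ‖ ≤ ‖ContinuousMap.toLp ∞ μ ℂ f +
      c • indicatorConstLp ∞ hK.measurableSet (measure_ne_top μ K) (1 : ℂ)‖ := by
  set χ := indicatorConstLp ∞ hK.measurableSet (measure_ne_top μ K) (1 : ℂ)
  refine (norm_integral_le_of_norm_le_const (ae_of_all _ f.norm_coe_le_norm)).trans ?_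
  rw [probReal_univ, mul_one]
  refine f.norm_le_norm_of_ae_eq_on_compl hK hKnd _ ?_
  filter_upwards [Lp.coeFn_add (ContinuousMap.toLp ∞ μ ℂ f) (c • χ),
    ContinuousMap.coeFn_toLp (p := ∞) (𝕜 := ℂ) μ f, Lp.coeFn_smul c χ,
    indicatorConstLp_coeFn (p := ∞) (hs := hK.measurableSet) (c := (1 : ℂ))]
    with x hadd hf hsmul hχ hxK
  rw [hadd, Pi.add_apply, hf, hsmul, Pi.smul_apply, hχ, indicator_of_notMem hxK, smul_zero,
    add_zero]

theorem ContinuousMap.integralCLM'_toLp_one [CompactSpace X] [BorelSpace X] [IsFiniteMeasure μ]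
    (f : C(X, ℂ)) : L1.integralCLM' ℂ (ContinuousMap.toLp 1 μ ℂ f) = ∫ x, f x ∂μ := by
  rw [← L1.integral_eq', L1.integral_eq_integral]
  exact integral_congr_ae (ContinuousMap.coeFn_toLp μ f)

theorem enorm_setIntegral_le_lintegral_sdiff_of_forall_integral_mul_eq_zero [NormalSpace X]
    [OpensMeasurableSpace X] {h : X → ℂ} (hh : Integrable h μ)
    (H : ∀ f : C(X, ℂ), ∫ x, f x * h x ∂μ = 0) {K U : Set X} (hK : IsClosed K) (hU : IsOpen U)
    (hKU : K ⊆ U) : ‖∫ x in K, h x ∂μ‖ₑ ≤ ∫⁻ x in U \ K, ‖h x‖ₑ ∂μ := by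
  obtain ⟨f, hfU, hfK, hf01⟩ :=
    exists_continuous_zero_one_of_isClosed hU.isClosed_compl hK (disjoint_compl_left.mono_right hKU)
  let F : C(X, ℂ) := ⟨fun x => (f x : ℂ), by fun_prop⟩
  have hF : ∀ x, ‖F x‖ ≤ 1 := fun x => by
    simpa [F, abs_le] using ⟨by linarith [(hf01 x).1], (hf01 x).2⟩
  have hFh : Integrable (fun x => F x * h x) μ :=
    hh.bdd_mul F.continuous.aestronglyMeasurable (ae_of_all _ hF)
  have hsplit : ∫ x in K, h x ∂μ + ∫ x in U \ K, F x * h x ∂μ = ∫ x, F x * h x ∂μ := by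
    have hF_U : ∫ x in U, F x * h x ∂μ = ∫ x, F x * h x ∂μ :=
      setIntegral_eq_integral_of_forall_compl_eq_zero fun x hx => by simp [F, hfU hx]
    rw [← hF_U, ← integral_inter_add_sdiff (s := U) hK.measurableSet hFh.integrableOn,
      inter_eq_right.2 hKU]
    congr 1
    exact setIntegral_congr_fun hK.measurableSet fun x hx => by simp [F, hfK hx]
  rw [H F, add_eq_zero_iff_eq_neg] at hsplit
  calc ‖∫ x in K, h x ∂μ‖ₑ = ‖∫ x in U \ K, F x * h x ∂μ‖ₑ := by rw [hsplit, enorm_neg]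
    _ ≤ ∫⁻ x in U \ K, ‖F x * h x‖ₑ ∂μ := enorm_integral_le_lintegral_enorm _
    _ ≤ ∫⁻ x in U \ K, ‖h x‖ₑ ∂μ := lintegral_mono fun x => by
        rw [enorm_mul]
        exact mul_le_of_le_one_left' (ofReal_norm (F x) ▸ ENNReal.ofReal_le_one.2 (hF x))

theorem setIntegral_eq_zero_of_forall_integral_mul_eq_zero [NormalSpace X] [OpensMeasurableSpace X]
    [IsFiniteMeasure μ] [μ.OuterRegular] {h : X → ℂ} (hh : Integrable h μ)
    (H : ∀ f : C(X, ℂ), ∫ x, f x * h x ∂μ = 0) {K : Set X} (hK : IsClosed K) :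
    ∫ x in K, h x ∂μ = 0 := by
  by_contra hne
  obtain ⟨δ, hδ, hδ_lt⟩ := exists_pos_setLIntegral_lt_of_measure_lt hh.2.ne (enorm_ne_zero.2 hne)
  obtain ⟨U, hKU, hU, -, hUK⟩ := hK.measurableSet.exists_isOpen_sdiff_lt (measure_ne_top μ K) hδ.ne'
  exact lt_irrefl _
    ((enorm_setIntegral_le_lintegral_sdiff_of_forall_integral_mul_eq_zero hh H hK hU hKU).trans_lt
      (hδ_lt _ hUK))

theorem setIntegral_eq_measureReal_of_forall_integral_mul_eq_integral [CompactSpace X]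
    [NormalSpace X] [OpensMeasurableSpace X] [IsFiniteMeasure μ] [μ.OuterRegular] {g : X → ℂ}
    (hg : Integrable g μ) (H : ∀ f : C(X, ℂ), ∫ x, f x * g x ∂μ = ∫ x, f x ∂μ) {K : Set X}
    (hK : IsClosed K) : ∫ x in K, g x ∂μ = μ.real K := by
  have hint (f : C(X, ℂ)) : ∫ x, f x * (g x - 1) ∂μ = 0 := by
    have hfg : Integrable (fun x => f x * g x) μ :=
      hg.bdd_mul f.continuous.aestronglyMeasurable (ae_of_all _ f.norm_coe_le_norm)
    simp only [mul_sub, mul_one]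
    rw [integral_sub hfg (f.continuous.integrable_of_hasCompactSupport (.of_compactSpace f)), H,
      sub_self]
  have hgK := setIntegral_eq_zero_of_forall_integral_mul_eq_zero
    (h := fun x => g x - 1) (hg.sub (integrable_const 1)) hint hK
  rwa [integral_sub hg.integrableOn (integrable_const 1).integrableOn, setIntegral_const,
    sub_eq_zero, Complex.real_smul, mul_one] at hgK

theorem MeasureTheory.MemLp.toLp_eq_continuousMap_toLp [CompactSpace X] [BorelSpace X]
    [IsFiniteMeasure μ] {p : ℝ≥0∞} [Fact (1 ≤ p)] (f : C(X, ℂ)) (hf : MemLp (fun x => f x) p μ) :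
    hf.toLp _ = ContinuousMap.toLp p μ ℂ f :=
  Lp.ext (hf.coeFn_toLp.trans (ContinuousMap.coeFn_toLp μ f).symm)

theorem exists_dual_eq_integral_and_apply_indicatorConstLp_eq_zero [CompactSpace X] [BorelSpace X]
    [IsProbabilityMeasure μ] [μ.IsOpenPosMeasure] {K : Set X} (hK : IsClosed K)
    (hKnd : interior K = ∅) :
    ∃ ψ : StrongDual ℂ (Lp ℂ ∞ μ), ‖ψ‖ ≤ 1 ∧
      (∀ f : C(X, ℂ), ψ (ContinuousMap.toLp ∞ μ ℂ f) = ∫ x, f x ∂μ) ∧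
      ψ (indicatorConstLp ∞ hK.measurableSet (measure_ne_top μ K) 1) = 0 := by
  obtain ⟨ψ, hψ_norm, hψ⟩ := exists_dual_comp_eq_of_norm_le
    ((ContinuousMap.toLp ∞ μ ℂ).toLinearMap.coprod (LinearMap.toSpanSingleton ℂ _
      (indicatorConstLp ∞ hK.measurableSet (measure_ne_top μ K) 1)))
    ((L1.integralCLM' ℂ ∘L ContinuousMap.toLp 1 μ ℂ).toLinearMap ∘ₗ LinearMap.fst ℂ _ ℂ)
    fun p => by
      simpa [ContinuousMap.integralCLM'_toLp_one] using
        norm_integral_le_norm_toLp_add_smul_indicatorConstLp hK hKnd p.1 p.2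
  exact ⟨ψ, hψ_norm, fun f => by simpa [ContinuousMap.integralCLM'_toLp_one] using hψ (f, 0),
    by simpa using hψ (0, 1)⟩

theorem apply_indicatorConstLp_eq_measureReal_of_eq_integral_mul [CompactSpace X] [NormalSpace X]
    [BorelSpace X] [IsFiniteMeasure μ] [μ.OuterRegular] {ψ : Lp ℂ ∞ μ → ℂ}
    (hψ : ∀ f : C(X, ℂ), ψ (ContinuousMap.toLp ∞ μ ℂ f) = ∫ x, f x ∂μ) {g : X → ℂ}
    (hg : Integrable g μ) (hψg : ∀ u, ψ u = ∫ x, u x * g x ∂μ) {K : Set X} (hK : IsClosed K) :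
    ψ (indicatorConstLp ∞ hK.measurableSet (measure_ne_top μ K) 1) = μ.real K := by
  have hg_cont (f : C(X, ℂ)) : ∫ x, f x * g x ∂μ = ∫ x, f x ∂μ := by
    rw [← hψ, hψg]
    refine integral_congr_ae ?_
    filter_upwards [ContinuousMap.coeFn_toLp (p := ∞) (𝕜 := ℂ) μ f] with x hx
    rw [hx]
  rw [hψg, ← setIntegral_eq_measureReal_of_forall_integral_mul_eq_integral hg hg_cont hK,
    ← integral_indicator hK.measurableSet]
  refine integral_congr_ae ?_
  filter_upwards [indicatorConstLp_coeFn (p := ∞) (hs := hK.measurableSet)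
    (hμs := measure_ne_top μ K) (c := (1 : ℂ))] with x hx
  by_cases hxK : x ∈ K <;> simp [hx, hxK]

end

/-- if `X` is compact Hausdorff, `μ` a regular Borel probability measure
with full support, and there is a closed nowhere dense `K ⊆ X` with `μ(K) > 0`, then
there is a state `ψ` on `L∞(X, μ)` restricting to integration against `μ` on `C(X)` but
not weak-* continuous (not given by integration against an `L¹(μ)` function); in
particular the inclusion `C(X) ⊆ L∞(X, μ)` fails the Gleason–Whitney property for
states relative to `L∞(X, μ)`. -/
theorem stmt16 {X : Type*} [TopologicalSpace X] [CompactSpace X] [T2Space X]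
    [MeasurableSpace X] [BorelSpace X]
    (μ : Measure X) [IsProbabilityMeasure μ] [μ.Regular] [μ.IsOpenPosMeasure]
    (K : Set X) (hK : IsClosed K) (hKnd : interior K = ∅) (hKpos : 0 < μ K) :
    ∃ ψ : Lp ℂ ⊤ μ →L[ℂ] ℂ,
      ‖ψ‖ ≤ 1 ∧
      (∀ h1 : MemLp (fun _ : X => (1 : ℂ)) ⊤ μ, ψ (h1.toLp _) = 1) ∧
      (∀ f : C(X, ℂ), ∀ hf : MemLp (fun x => f x) ⊤ μ,
        ψ (hf.toLp _) = ∫ x, f x ∂μ) ∧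
      ¬ ∃ g : X → ℂ, Integrable g μ ∧
        ∀ u : Lp ℂ ⊤ μ, ψ u = ∫ x, u x * g x ∂μ := by
  obtain ⟨ψ, hψ_norm, hψ_cont, hψ_K⟩ :=
    exists_dual_eq_integral_and_apply_indicatorConstLp_eq_zero (μ := μ) hK hKnd
  refine ⟨ψ, hψ_norm, fun h1 => ?_, fun f hf => by rw [hf.toLp_eq_continuousMap_toLp, hψ_cont], ?_⟩
  · calc ψ (h1.toLp _) = ψ (ContinuousMap.toLp ∞ μ ℂ (.const X 1)) :=
          congrArg ψ (h1.toLp_eq_continuousMap_toLp (.const X 1))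
      _ = 1 := by simp [hψ_cont]
  rintro ⟨g, hg, hψg⟩
  have hK_real := apply_indicatorConstLp_eq_measureReal_of_eq_integral_mul hψ_cont hg hψg hK
  rw [hψ_K, eq_comm, Complex.ofReal_eq_zero, measureReal_eq_zero_iff (measure_ne_top μ K)]
    at hK_real
  exact hKpos.ne' hK_real
end
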